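/- arXiv:1509.04174 — 3 statements merged into one kernel-verified Lean document; each statement's English description precedes it below -/
import Mathlib

section
/- The integral ∫₀^{2π} √(2−2cos φ)·(2 sin φ − φ cos φ − φ)/φ⁴ dφ is strictly positive. -/
/-!
Put `t = φ / 2`. Since `√(2 - 2 cos φ) = 2 sin t` and
`2 sin φ - φ cos φ - φ = 4 cos t (sin t - t cos t)`, the integrand is `sin φ · w(t) / 4` with
`w(t) = (sin t - t cos t) / t⁴`; it is bounded because `0 ≤ sin t - t cos t ≤ t³ / 2`.
The weight `w` is strictly decreasing on `(0, π)`: `t⁵ w'(t) = (t² - 4) sin t + 4 t cos t`,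
which vanishes at `0` and has derivative `-t (sin t + (sin t - t cos t)) < 0`. Finally, for any `K`
strictly decreasing on `(0, 2π)`, pairing `φ` with `φ + π` gives
`∫₀^{2π} sin φ K(φ) dφ = ∫₀^π sin φ (K(φ) - K(φ + π)) dφ > 0`.
-/

open Real MeasureTheory Set intervalIntegral

theorem integral_sin_mul_pos_of_strictAntiOn {K : ℝ → ℝ}
    (hK : StrictAntiOn K (Ioo 0 (2 * π)))
    (hint : IntervalIntegrable (fun x => sin x * K x) volume 0 (2 * π)) :
    0 < ∫ x in 0..2 * π, sin x * K x := by
  set f := fun x => sin x * K x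
  have hπ : π ≤ 2 * π := by linarith [pi_pos]
  have hleft : IntervalIntegrable f volume 0 π :=
    hint.mono_set (uIcc_subset_uIcc_left (by simp [pi_pos.le, hπ]))
  have hright : IntervalIntegrable f volume π (2 * π) :=
    hint.mono_set (uIcc_subset_uIcc_right (by simp [pi_pos.le, hπ]))
  have hshift : IntervalIntegrable (fun x => f (x + π)) volume 0 π := by
    simpa [two_mul] using hright.comp_add_right π
  have hsplit : ∫ x in 0..2 * π, f x = ∫ x in 0..π, (f x + f (x + π)) := by
    rw [integral_add hleft hshift, integral_comp_add_right,
      ← integral_add_adjacent_intervals hleft hright]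
    norm_num [two_mul]
  rw [hsplit]
  refine intervalIntegral_pos_of_pos_on (hleft.add hshift) (fun x hx => ?_) pi_pos
  have hKx : K (x + π) < K x :=
    hK ⟨hx.1, by linarith [hx.2]⟩ ⟨by linarith [hx.1], by linarith [hx.2]⟩
      (by linarith [pi_pos])
  have hsinx : 0 < sin x := sin_pos_of_pos_of_lt_pi hx.1 hx.2
  simp only [f, sin_add_pi]
  nlinarith

theorem sin_sub_mul_cos_nonneg {t : ℝ} (h0 : 0 ≤ t) (hπ : t ≤ π) :
    0 ≤ sin t - t * cos t := by
  have hderiv : ∀ s, HasDerivAt (fun s => sin s - s * cos s) (s * sin s) s := fun s => by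
    refine ((hasDerivAt_sin s).sub ((hasDerivAt_id' s).mul (hasDerivAt_cos s))).congr_deriv ?_
    ring
  have hmono : MonotoneOn (fun s => sin s - s * cos s) (Icc 0 π) := by
    refine monotoneOn_of_deriv_nonneg (convex_Icc 0 π) (by fun_prop)
      (fun s _ => (hderiv s).differentiableAt.differentiableWithinAt) fun s hs => ?_
    rw [interior_Icc] at hs
    rw [(hderiv s).deriv]
    exact mul_nonneg hs.1.le (sin_nonneg_of_nonneg_of_le_pi hs.1.le hs.2.le)
  simpa using hmono ⟨le_rfl, pi_pos.le⟩ ⟨h0, hπ⟩ h0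

theorem sin_sub_mul_cos_le {t : ℝ} (h0 : 0 ≤ t) : sin t - t * cos t ≤ t ^ 3 / 2 := by
  nlinarith [sin_le h0, mul_le_mul_of_nonneg_left (one_sub_sq_div_two_le_cos (x := t)) h0]

theorem sq_sub_four_mul_sin_add_four_mul_mul_cos_neg {t : ℝ} (h0 : 0 < t) (hπ : t ≤ π) :
    (t ^ 2 - 4) * sin t + 4 * t * cos t < 0 := by
  have hderiv : ∀ s, HasDerivAt (fun s => (s ^ 2 - 4) * sin s + 4 * s * cos s)
      (-s * (sin s + (sin s - s * cos s))) s := fun s => by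
    refine ((((hasDerivAt_pow 2 s).sub_const 4).mul (hasDerivAt_sin s)).add
      (((hasDerivAt_id' s).const_mul 4).mul (hasDerivAt_cos s))).congr_deriv ?_
    push_cast; ring
  have hanti : StrictAntiOn (fun s => (s ^ 2 - 4) * sin s + 4 * s * cos s) (Icc 0 π) := by
    refine strictAntiOn_of_deriv_neg (convex_Icc 0 π) (by fun_prop) fun s hs => ?_
    rw [interior_Icc] at hs
    rw [(hderiv s).deriv, neg_mul]
    exact neg_neg_of_pos <| mul_pos hs.1 <| add_pos_of_pos_of_nonneg
      (sin_pos_of_pos_of_lt_pi hs.1 hs.2) (sin_sub_mul_cos_nonneg hs.1.le hs.2.le)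
  simpa using hanti ⟨le_rfl, pi_pos.le⟩ ⟨h0.le, hπ⟩ h0

theorem strictAntiOn_sin_sub_mul_cos_div_pow_four :
    StrictAntiOn (fun t => (sin t - t * cos t) / t ^ 4) (Ioo 0 π) := by
  have hderiv : ∀ t ≠ 0, HasDerivAt (fun t => (sin t - t * cos t) / t ^ 4)
      (((t ^ 2 - 4) * sin t + 4 * t * cos t) / t ^ 5) t := fun t ht => by
    refine (((hasDerivAt_sin t).sub ((hasDerivAt_id' t).mul (hasDerivAt_cos t))).div
      (hasDerivAt_pow 4 t) (pow_ne_zero 4 ht)).congr_deriv ?_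
    simp only [Pi.sub_apply, Pi.mul_apply]; field_simp; ring
  refine strictAntiOn_of_deriv_neg (convex_Ioo 0 π)
    (fun t ht => (hderiv t ht.1.ne').continuousAt.continuousWithinAt) fun t ht => ?_
  rw [interior_Ioo] at ht
  rw [(hderiv t ht.1.ne').deriv]
  exact div_neg_of_neg_of_pos (sq_sub_four_mul_sin_add_four_mul_mul_cos_neg ht.1 ht.2.le)
    (pow_pos ht.1 5)

theorem abs_sin_two_mul_mul_sin_sub_mul_cos_div_pow_four_le_one {t : ℝ} (h0 : 0 ≤ t)
    (hπ : t ≤ π) :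
    |sin (2 * t) * ((sin t - t * cos t) / t ^ 4)| ≤ 1 := by
  rcases h0.eq_or_lt with rfl | hpos
  · simp
  have hsin : |sin (2 * t)| ≤ 2 * t := by
    simpa [abs_of_pos hpos] using abs_sin_le_abs (x := 2 * t)
  rw [abs_mul, abs_of_nonneg (div_nonneg (sin_sub_mul_cos_nonneg h0 hπ) (by positivity)),
    ← mul_div_assoc, div_le_one (by positivity)]
  calc |sin (2 * t)| * (sin t - t * cos t) ≤ 2 * t * (t ^ 3 / 2) :=
        mul_le_mul hsin (sin_sub_mul_cos_le h0) (sin_sub_mul_cos_nonneg h0 hπ) (by positivity)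
    _ = t ^ 4 := by ring

theorem sqrt_two_sub_two_mul_cos (x : ℝ) : √(2 - 2 * cos x) = 2 * |sin (x / 2)| := by
  have hsq : 2 - 2 * cos x = (2 * sin (x / 2)) ^ 2 := by
    have h := cos_two_mul_eq_one_sub (x / 2)
    rw [show 2 * (x / 2) = x by ring] at h
    rw [h]
    ring
  rw [hsq, sqrt_sq_eq_abs, abs_mul, abs_two]

theorem sqrt_two_sub_two_mul_cos_mul_div_pow_four {φ : ℝ} (h : 0 ≤ sin (φ / 2)) :
    √(2 - 2 * cos φ) * (2 * sin φ - φ * cos φ - φ) / φ ^ 4 =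
      sin φ * ((sin (φ / 2) - φ / 2 * cos (φ / 2)) / (φ / 2) ^ 4) / 4 := by
  obtain ⟨t, rfl⟩ : ∃ t, φ = 2 * t := ⟨φ / 2, by ring⟩
  have ht : 2 * t / 2 = t := by ring
  rw [ht] at h ⊢
  rw [sqrt_two_sub_two_mul_cos, ht, abs_of_nonneg h, sin_two_mul, cos_two_mul]
  ring

/-- The integral `∫₀^{2π} √(2−2cos φ)·(2 sin φ − φ cos φ − φ)/φ⁴ dφ` is strictly positive. -/
theorem integral_slice0_pos :
    0 < ∫ φ in (0:ℝ)..(2*π),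
        Real.sqrt (2 - 2*Real.cos φ) * (2*Real.sin φ - φ*Real.cos φ - φ) / φ^4 := by
  have h2π : (0 : ℝ) ≤ 2 * π := by positivity
  have hfactor : EqOn (fun φ => √(2 - 2 * cos φ) * (2 * sin φ - φ * cos φ - φ) / φ ^ 4)
      (fun φ => sin φ * ((sin (φ / 2) - φ / 2 * cos (φ / 2)) / (φ / 2) ^ 4 / 4))
      (uIcc 0 (2 * π)) := fun φ hφ => by
    rw [uIcc_of_le h2π] at hφ
    dsimp only
    rw [sqrt_two_sub_two_mul_cos_mul_div_pow_four
      (sin_nonneg_of_nonneg_of_le_pi (by linarith [hφ.1]) (by linarith [hφ.2])), mul_div_assoc]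
  rw [integral_congr hfactor]
  refine integral_sin_mul_pos_of_strictAntiOn (fun a ha b hb hab => ?_) ?_
  · exact (div_lt_div_iff_of_pos_right four_pos).2 <|
      strictAntiOn_sin_sub_mul_cos_div_pow_four ⟨half_pos ha.1, by linarith [ha.2]⟩
        ⟨half_pos hb.1, by linarith [hb.2]⟩ (by linarith)
  · rw [intervalIntegrable_iff_integrableOn_Ioc_of_le h2π]
    refine Measure.integrableOn_of_bounded (M := 1 / 4) measure_Ioc_lt_top.ne (by fun_prop)
      (ae_restrict_of_forall_mem measurableSet_Ioc fun φ hφ => ?_)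
    have hbound := abs_sin_two_mul_mul_sin_sub_mul_cos_div_pow_four_le_one (t := φ / 2)
      (by linarith [hφ.1]) (by linarith [hφ.2])
    rw [show 2 * (φ / 2) = φ by ring] at hbound
    rw [norm_eq_abs, mul_div_assoc', abs_div, abs_of_pos (four_pos : (0 : ℝ) < 4)]
    linarith
end

section
/- The integral ∫₀^{3π/2} √((2−2cos φ)/φ² − 8/(9π²))·(2 sin φ − φ cos φ − φ)/φ³ dφ is strictly positive. -/
/-!
On `[0, π]` the numerator `2 sin φ − φ cos φ − φ = 4 cos (φ/2) (sin (φ/2) − (φ/2) cos (φ/2))` is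
nonnegative, and on `[π, 2π]` it is nonpositive, so only `[π, 3π/2]` contributes negatively.
The fourth-order Taylor bounds for `sin` and `cos` give, on `(0, 1]`, radicand `≥ (9/10)²` and
numerator `≥ φ³/8`, hence `∫₀¹ ≥ 9/80`. On `[π, 3π/2]` the radicand is at most `4/π²` and
`φ³ ≥ π³`, so that part of the integral is at least `(2/π⁴) ∫_π^{3π/2} (2 sin φ − φ cos φ − φ) dφ
= (2/π⁴)(3π/2 − 5π²/8 − 3) ≈ −0.092`, which `9/80` outweighs.
-/

open Real MeasureTheory Set

namespace Real

theorem cos_le_one_sub_sq_div_two_add_pow_four_div (x : ℝ) :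
    cos x ≤ 1 - x ^ 2 / 2 + x ^ 4 / 24 := by
  wlog hx : 0 ≤ x generalizing x
  · simpa [show (-x) ^ 4 = x ^ 4 by ring] using this (-x) (by linarith)
  have hsin := sin_ge_sub_cube (x := x / 2) (by positivity)
  have hcos : cos x = 1 - 2 * sin (x / 2) ^ 2 := by
    have := cos_sq (x / 2)
    rw [mul_div_cancel₀ x two_ne_zero] at this
    linarith [sin_sq_add_cos_sq (x / 2)]
  rcases le_or_gt 0 (x / 2 - (x / 2) ^ 3 / 6) with hp | hp
  · nlinarith [mul_self_le_mul_self hp hsin, pow_nonneg hx 6]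
  · have : 24 < x ^ 2 := by nlinarith
    nlinarith [cos_le_one x]

theorem mul_cos_le_sin {x : ℝ} (h₀ : 0 ≤ x) (h : x ≤ π / 2) : x * cos x ≤ sin x := by
  rcases h.lt_or_eq with h | rfl
  · have hcos : 0 < cos x := cos_pos_of_mem_Ioo ⟨by linarith [pi_pos], h⟩
    have := le_tan h₀ h
    rwa [tan_eq_sin_div_cos, le_div_iff₀ hcos] at this
  · simp

end Real

noncomputable def sliceNumerator (φ : ℝ) : ℝ := 2 * sin φ - φ * cos φ - φ

noncomputable def sliceRadicand (φ : ℝ) : ℝ := (2 - 2 * cos φ) / φ ^ 2 - 8 / (9 * π ^ 2)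

noncomputable def sliceIntegrand (φ : ℝ) : ℝ := √(sliceRadicand φ) * sliceNumerator φ / φ ^ 3

section Pointwise

variable {φ : ℝ}

theorem le_sliceNumerator (hφ : 0 ≤ φ) : φ ^ 3 / 6 - φ ^ 5 / 24 ≤ sliceNumerator φ := by
  unfold sliceNumerator
  nlinarith [sin_ge_sub_cube hφ,
    mul_le_mul_of_nonneg_left (cos_le_one_sub_sq_div_two_add_pow_four_div φ) hφ]

theorem sliceNumerator_le (hφ : 0 ≤ φ) : sliceNumerator φ ≤ φ ^ 3 / 2 := by
  unfold sliceNumerator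
  nlinarith [sin_le hφ, mul_le_mul_of_nonneg_left (one_sub_sq_div_two_le_cos (x := φ)) hφ]

theorem abs_sliceNumerator_le (h₀ : 0 ≤ φ) (h₅ : φ ≤ 5) : |sliceNumerator φ| ≤ φ ^ 3 := by
  have := le_sliceNumerator h₀
  have := sliceNumerator_le h₀
  have hφ₂ : φ ^ 2 * φ ^ 3 ≤ 25 * φ ^ 3 :=
    mul_le_mul_of_nonneg_right (by nlinarith) (pow_nonneg h₀ 3)
  rw [abs_le]
  constructor <;> nlinarith [pow_nonneg h₀ 3]

theorem sliceNumerator_nonneg (h₀ : 0 ≤ φ) (hπ : φ ≤ π) : 0 ≤ sliceNumerator φ := by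
  have hsin : sin φ = 2 * sin (φ / 2) * cos (φ / 2) := by
    rw [← sin_two_mul, mul_div_cancel₀ φ two_ne_zero]
  have hcos : cos φ = 2 * cos (φ / 2) ^ 2 - 1 := by
    rw [← cos_two_mul, mul_div_cancel₀ φ two_ne_zero]
  have hc : 0 ≤ cos (φ / 2) := cos_nonneg_of_mem_Icc ⟨by linarith [pi_pos], by linarith⟩
  have hhalf := mul_cos_le_sin (x := φ / 2) (by linarith) (by linarith)
  have hfactor : sliceNumerator φ = 4 * cos (φ / 2) * (sin (φ / 2) - φ / 2 * cos (φ / 2)) := by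
    rw [sliceNumerator, hsin, hcos]
    ring
  rw [hfactor]
  exact mul_nonneg (by positivity) (by linarith)

theorem sliceNumerator_nonpos (hπ : π ≤ φ) (h₂π : φ ≤ 2 * π) : sliceNumerator φ ≤ 0 := by
  have hsin : sin φ ≤ 0 := by
    rw [← neg_nonneg, ← sin_sub_pi]
    exact sin_nonneg_of_nonneg_of_le_pi (by linarith) (by linarith)
  have := neg_one_le_cos φ
  unfold sliceNumerator
  nlinarith [pi_pos]

theorem sliceRadicand_le_one : sliceRadicand φ ≤ 1 := by
  have : (2 - 2 * cos φ) / φ ^ 2 ≤ 1 :=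
    div_le_one_of_le₀ (by linarith [one_sub_sq_div_two_le_cos (x := φ)]) (sq_nonneg φ)
  have : 0 < 8 / (9 * π ^ 2) := by positivity
  unfold sliceRadicand
  linarith

theorem sqrt_sliceRadicand_le_of_pi_le (hπ : π ≤ φ) : √(sliceRadicand φ) ≤ 2 / π := by
  have hφ : 0 < φ := pi_pos.trans_le hπ
  rw [sqrt_le_left (by positivity)]
  have : (2 - 2 * cos φ) / φ ^ 2 ≤ 4 / π ^ 2 :=
    div_le_div₀ (by norm_num) (by linarith [neg_one_le_cos φ]) (by positivity)
      (pow_le_pow_left₀ pi_pos.le hπ 2)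
  have : 0 < 8 / (9 * π ^ 2) := by positivity
  rw [div_pow]
  unfold sliceRadicand
  linarith

theorem le_sliceRadicand (hφ : φ ≠ 0) : 1 - φ ^ 2 / 12 - 8 / (9 * π ^ 2) ≤ sliceRadicand φ := by
  have : 1 - φ ^ 2 / 12 ≤ (2 - 2 * cos φ) / φ ^ 2 := by
    rw [le_div_iff₀ (by positivity)]
    nlinarith [cos_le_one_sub_sq_div_two_add_pow_four_div φ]
  unfold sliceRadicand
  linarith

theorem sliceIntegrand_nonneg (h₀ : 0 ≤ φ) (hπ : φ ≤ π) : 0 ≤ sliceIntegrand φ :=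
  div_nonneg (mul_nonneg (sqrt_nonneg _) (sliceNumerator_nonneg h₀ hπ)) (by positivity)

theorem abs_sliceIntegrand_le_one (h₀ : 0 ≤ φ) (h₅ : φ ≤ 5) : |sliceIntegrand φ| ≤ 1 := by
  rcases h₀.eq_or_lt with rfl | h₀
  · simp [sliceIntegrand]
  have hsqrt : √(sliceRadicand φ) ≤ 1 := sqrt_le_one.mpr sliceRadicand_le_one
  rw [sliceIntegrand, abs_div, abs_mul, abs_of_nonneg (sqrt_nonneg _), abs_of_pos (pow_pos h₀ 3),
    div_le_one (pow_pos h₀ 3)]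
  calc √(sliceRadicand φ) * |sliceNumerator φ| ≤ 1 * φ ^ 3 :=
        mul_le_mul hsqrt (abs_sliceNumerator_le h₀.le h₅) (abs_nonneg _) zero_le_one
    _ = φ ^ 3 := one_mul _

theorem le_sliceIntegrand_of_mem_Ioc (h : φ ∈ Ioc 0 1) : 9 / 80 ≤ sliceIntegrand φ := by
  obtain ⟨h₀, h₁⟩ := h
  have hrad : (9 / 10) ^ 2 ≤ sliceRadicand φ := by
    have := le_sliceRadicand h₀.ne'
    have : 8 / (9 * π ^ 2) ≤ 1 / 10 := by
      rw [div_le_div_iff₀ (by positivity) (by norm_num)]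
      nlinarith [pi_gt_three]
    nlinarith
  have hsqrt : 9 / 10 ≤ √(sliceRadicand φ) := le_sqrt_of_sq_le hrad
  have hnum : φ ^ 3 / 8 ≤ sliceNumerator φ := by
    nlinarith [le_sliceNumerator h₀.le,
      mul_nonneg (pow_pos h₀ 3).le (by nlinarith : 0 ≤ 1 - φ ^ 2)]
  rw [sliceIntegrand, le_div_iff₀ (by positivity)]
  calc 9 / 80 * φ ^ 3 = 9 / 10 * (φ ^ 3 / 8) := by ring
    _ ≤ √(sliceRadicand φ) * sliceNumerator φ :=
        mul_le_mul hsqrt hnum (by positivity) (sqrt_nonneg _)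

theorem le_sliceIntegrand_of_pi_le (hπ : π ≤ φ) (h₂π : φ ≤ 2 * π) :
    2 / π ^ 4 * sliceNumerator φ ≤ sliceIntegrand φ := by
  have hN := sliceNumerator_nonpos hπ h₂π
  have hφ : 0 < φ := pi_pos.trans_le hπ
  have hsqrt : 2 / π * sliceNumerator φ ≤ √(sliceRadicand φ) * sliceNumerator φ :=
    mul_le_mul_of_nonpos_right (sqrt_sliceRadicand_le_of_pi_le hπ) hN
  rw [sliceIntegrand]
  calc 2 / π ^ 4 * sliceNumerator φ = 2 / π * sliceNumerator φ / π ^ 3 := by field_simp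
    _ ≤ 2 / π * sliceNumerator φ / φ ^ 3 := by
        rw [div_le_div_iff₀ (by positivity) (by positivity)]
        exact mul_le_mul_of_nonpos_left (pow_le_pow_left₀ pi_pos.le hπ 3)
          (mul_nonpos_of_nonneg_of_nonpos (by positivity) hN)
    _ ≤ √(sliceRadicand φ) * sliceNumerator φ / φ ^ 3 :=
        div_le_div_of_nonneg_right hsqrt (by positivity)

end Pointwise

theorem integrableOn_sliceIntegrand : IntegrableOn sliceIntegrand (Icc 0 5) := by
  refine Measure.integrableOn_of_bounded (M := 1) measure_Icc_lt_top.ne ?_ ?_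
  · unfold sliceIntegrand sliceRadicand sliceNumerator
    exact (by fun_prop : Measurable _).aestronglyMeasurable
  · filter_upwards [ae_restrict_mem measurableSet_Icc] with φ hφ
    exact abs_sliceIntegrand_le_one hφ.1 hφ.2

theorem intervalIntegrable_sliceIntegrand {a b : ℝ} (ha : a ∈ Icc 0 5) (hb : b ∈ Icc 0 5) :
    IntervalIntegrable sliceIntegrand volume a b :=
  (integrableOn_sliceIntegrand.mono_set (uIcc_subset_Icc ha hb)).intervalIntegrable

theorem integral_sliceNumerator_pi_three_pi_div_two :
    ∫ φ in π..3 * π / 2, sliceNumerator φ = 3 * π / 2 - 5 * π ^ 2 / 8 - 3 := by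
  have hderiv : ∀ φ ∈ uIcc π (3 * π / 2),
      HasDerivAt (fun t => -3 * cos t - t * sin t - t ^ 2 / 2) (sliceNumerator φ) φ := by
    intro φ _
    refine ((((hasDerivAt_cos φ).const_mul (-3)).sub
      ((hasDerivAt_id φ).mul (hasDerivAt_sin φ))).sub
        ((hasDerivAt_pow 2 φ).div_const 2)).congr_deriv ?_
    unfold sliceNumerator
    norm_num
    ring
  rw [intervalIntegral.integral_eq_sub_of_hasDerivAt hderiv
    (by unfold sliceNumerator; exact Continuous.intervalIntegrable (by fun_prop) _ _)]
  rw [show 3 * π / 2 = π / 2 + π by ring, sin_add_pi, cos_add_pi, sin_pi_div_two, cos_pi_div_two,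
    sin_pi, cos_pi]
  ring

theorem le_integral_sliceIntegrand_zero_one : 9 / 80 ≤ ∫ φ in (0 : ℝ)..1, sliceIntegrand φ := by
  have := intervalIntegral.integral_mono_on_of_le_Ioo zero_le_one intervalIntegrable_const
    (intervalIntegrable_sliceIntegrand (a := 0) (b := 1) (by norm_num) (by norm_num))
    (fun φ hφ => le_sliceIntegrand_of_mem_Ioc (Ioo_subset_Ioc_self hφ))
  simpa using this

theorem le_integral_sliceIntegrand_pi_three_pi_div_two :
    2 / π ^ 4 * (3 * π / 2 - 5 * π ^ 2 / 8 - 3) ≤ ∫ φ in π..3 * π / 2, sliceIntegrand φ := by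
  have hπ := pi_pos
  have hπ₄ := pi_lt_d2
  rw [← integral_sliceNumerator_pi_three_pi_div_two, ← intervalIntegral.integral_const_mul]
  refine intervalIntegral.integral_mono_on (by linarith) ?_
    (intervalIntegrable_sliceIntegrand ⟨by linarith, by linarith⟩ ⟨by linarith, by linarith⟩)
    (fun φ hφ => le_sliceIntegrand_of_pi_le hφ.1 (by linarith [hφ.2]))
  unfold sliceNumerator
  exact Continuous.intervalIntegrable (by fun_prop) _ _

/-- The integral `∫₀^{3π/2} √((2−2cos φ)/φ² − 8/(9π²))·(2 sin φ − φ cos φ − φ)/φ³ dφ`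
is strictly positive. -/
theorem integral_slice1_pos :
    0 < ∫ φ in (0:ℝ)..(3*π/2),
        Real.sqrt ((2 - 2*Real.cos φ)/φ^2 - 8/(9*π^2)) *
          (2*Real.sin φ - φ*Real.cos φ - φ) / φ^3 := by
  show 0 < ∫ φ in (0 : ℝ)..3 * π / 2, sliceIntegrand φ
  have hπ₃ := pi_gt_d2
  have hπ₄ := pi_lt_d2
  have h₀ : (0 : ℝ) ∈ Icc 0 5 := ⟨le_rfl, by norm_num⟩
  have h₁ : (1 : ℝ) ∈ Icc 0 5 := ⟨by norm_num, by norm_num⟩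
  have hπ : π ∈ Icc 0 5 := ⟨pi_pos.le, by linarith⟩
  have h₃π₂ : 3 * π / 2 ∈ Icc 0 5 := ⟨by positivity, by linarith⟩
  rw [← intervalIntegral.integral_add_adjacent_intervals (intervalIntegrable_sliceIntegrand h₀ hπ)
      (intervalIntegrable_sliceIntegrand hπ h₃π₂),
    ← intervalIntegral.integral_add_adjacent_intervals (intervalIntegrable_sliceIntegrand h₀ h₁)
      (intervalIntegrable_sliceIntegrand h₁ hπ)]
  have hmiddle : 0 ≤ ∫ φ in (1 : ℝ)..π, sliceIntegrand φ :=
    intervalIntegral.integral_nonneg (by linarith) fun φ hφ =>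
      sliceIntegrand_nonneg (by linarith [hφ.1]) hφ.2
  have hnum : 0 < 9 / 80 + 2 / π ^ 4 * (3 * π / 2 - 5 * π ^ 2 / 8 - 3) := by
    have hπ₄' : (3.14 : ℝ) ^ 4 ≤ π ^ 4 := pow_le_pow_left₀ (by norm_num) hπ₃.le 4
    have hπ₂ : π ^ 2 ≤ (3.15 : ℝ) ^ 2 := pow_le_pow_left₀ pi_pos.le hπ₄.le 2
    rw [show 9 / 80 + 2 / π ^ 4 * (3 * π / 2 - 5 * π ^ 2 / 8 - 3)
      = (9 * π ^ 4 / 80 + 2 * (3 * π / 2 - 5 * π ^ 2 / 8 - 3)) / π ^ 4 by field_simp]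
    exact div_pos (by norm_num at hπ₄' hπ₂; linarith) (by positivity)
  linarith [le_integral_sliceIntegrand_zero_one, le_integral_sliceIntegrand_pi_three_pi_div_two]
end

section
/- For every φ ∈ (0, 3π/2] one has (2−2cos φ)/φ² ≥ 8/(9π²), and equality holds at φ = 3π/2. Moreover the continuous extension at φ = 0 has value 1, so the inequality also holds (strictly) at 0 with value 1 ≥ 8/(9π²). -/
/-!
Since `2 - 2 cos φ = 4 sin² (φ/2)`, the quotient `(2 - 2 cos φ)/φ²` is `sinc (φ/2)²`. The
chord slopes `sin x / x` of the concave function `sin` through `(0, 0)` decrease on `(0, π]`,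
so `sinc` is antitone on `[0, π]`; on `(0, 3π/2]` the quotient is therefore smallest at `3π/2`,
where it is `sinc (3π/4)² = 8/(9π²)`. The limit at `0` is `sinc 0 ^ 2 = 1` by continuity of
`sinc`.
-/

open Real

namespace Real

lemma sinc_antitoneOn_Icc : AntitoneOn sinc (Set.Icc 0 π) := by
  intro x hx y hy hxy
  rcases hx.1.eq_or_lt with rfl | hx₀
  · simpa only [sinc_zero] using sinc_le_one y
  have hy₀ : 0 < y := hx₀.trans_le hxy
  rw [sinc_eq_dslope, dslope_of_ne _ hx₀.ne', dslope_of_ne _ hy₀.ne']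
  exact strictConcaveOn_sin_Icc.concaveOn.antitoneOn_slope_gt
    (Set.left_mem_Icc.2 pi_pos.le) ⟨hx, hx₀⟩ ⟨hy, hy₀⟩ hxy

lemma two_sub_two_mul_cos_div_sq_eq_sinc_sq {x : ℝ} (hx : x ≠ 0) :
    (2 - 2 * cos x) / x ^ 2 = sinc (x / 2) ^ 2 := by
  rw [sinc_of_ne_zero (div_ne_zero hx two_ne_zero), div_pow, sin_sq_eq_half_sub,
    mul_div_cancel₀ _ two_ne_zero]
  field_simp

lemma sinc_three_pi_div_four_sq : sinc (3 * π / 4) ^ 2 = 8 / (9 * π ^ 2) := by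
  have h : 3 * π / 4 = π - π / 4 := by ring
  rw [sinc_of_ne_zero (by positivity), div_pow, h, sin_pi_sub, sin_pi_div_four, div_pow,
    sq_sqrt zero_le_two, ← h]
  field_simp
  ring

lemma sinc_three_pi_div_four_nonneg : 0 ≤ sinc (3 * π / 4) := by
  rw [sinc_of_ne_zero (by positivity)]
  exact div_nonneg (sin_nonneg_of_nonneg_of_le_pi (by positivity) (by linarith [pi_pos]))
    (by positivity)

end Real

/-- For every `φ ∈ (0, 3π/2]` one has `(2−2cos φ)/φ² ≥ 8/(9π²)`, with equality at
`φ = 3π/2`; moreover the continuous extension at `0` has value `1`, and `8/(9π²) < 1`. -/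
theorem sq_dist_lower_bound :
    (∀ φ ∈ Set.Ioc (0:ℝ) (3*π/2), 8/(9*π^2) ≤ (2 - 2*Real.cos φ)/φ^2) ∧
    (2 - 2*Real.cos (3*π/2))/(3*π/2)^2 = 8/(9*π^2) ∧
    Filter.Tendsto (fun φ : ℝ => (2 - 2*Real.cos φ)/φ^2)
      (nhdsWithin 0 (Set.Ioi 0)) (nhds 1) ∧
    8/(9*π^2) < 1 := by
  have hπ := pi_pos
  refine ⟨fun φ ⟨hφ₀, hφ⟩ ↦ ?_, ?_, ?_, ?_⟩
  · rw [two_sub_two_mul_cos_div_sq_eq_sinc_sq hφ₀.ne', ← sinc_three_pi_div_four_sq]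
    have hsinc_le : sinc (3 * π / 4) ≤ sinc (φ / 2) :=
      sinc_antitoneOn_Icc ⟨by linarith, by linarith⟩ ⟨by positivity, by linarith⟩
        (by linarith)
    exact pow_le_pow_left₀ sinc_three_pi_div_four_nonneg hsinc_le 2
  · rw [two_sub_two_mul_cos_div_sq_eq_sinc_sq (by positivity),
      show 3 * π / 2 / 2 = 3 * π / 4 by ring, sinc_three_pi_div_four_sq]
  · have hlim : Filter.Tendsto (fun φ : ℝ ↦ sinc (φ / 2) ^ 2) (nhds 0) (nhds 1) :=
      ((continuous_sinc.comp (continuous_id.div_const 2)).pow 2).tendsto' 0 1 (by simp)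
    refine (hlim.mono_left nhdsWithin_le_nhds).congr' ?_
    filter_upwards [self_mem_nhdsWithin] with φ hφ
    exact (two_sub_two_mul_cos_div_sq_eq_sinc_sq (ne_of_gt hφ)).symm
  · rw [div_lt_one (by positivity)]
    nlinarith [pi_gt_three]
end
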